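/- Assume Condition (D) and consider the coupling construction. Then for all (x, x') ∈ X²: E_{x,x',0}[ Σ_{n=0}^{T_1} r(n) ] ≤ 1 + (r(1)/(ε_b φ(1))) · (V̄(x, x') − 1) · 1_{(x,x') ∉ C̄}, where V̄(x, x') = V(x) + V(x') − 1. -/

import Mathlib

open MeasureTheory ProbabilityTheory Filter Set

noncomputable def iterKernel {X : Type*} [MeasurableSpace X]
    (P : ℕ → Kernel X X) : ℕ → Kernel X X
  | 0 => Kernel.id
  | n + 1 => (P (n + 1)).comp (iterKernel P n)

noncomputable def Hfun (φ : ℝ → ℝ) (t : ℝ) : ℝ := ∫ s in (1:ℝ)..t, (φ s)⁻¹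

noncomputable def Hinv (φ : ℝ → ℝ) : ℝ → ℝ := Function.invFunOn (Hfun φ) (Set.Ici 1)

noncomputable def rate (φ : ℝ → ℝ) (εb : ℝ) (n : ℕ) : ℝ := φ (Hinv φ (εb * n)) / φ 1

noncomputable def deltaSeq (φ : ℝ → ℝ) (εb : ℝ) (k : ℕ) : ℝ := εb * deriv φ (Hinv φ (εb * k))

noncomputable def bbar (φ : ℝ → ℝ) (εb bV : ℝ) : ℝ := 2 * bV + εb * φ 1

noncomputable def Mone (φ : ℝ → ℝ) (εb εν bV cV : ℝ) : ℝ :=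
  rate φ εb 1 * (1 + 2 * rate φ εb 1 / (εb * φ 1) * ((bV + cV) / (1 - εν) - 1))

noncomputable def cstar (φ : ℝ → ℝ) (εb εν bV cV : ℝ) : ℝ :=
  ∑' j : ℕ, (1 - εν) ^ j * ∏ k ∈ Finset.Icc 1 j, (1 + deltaSeq φ εb k * Mone φ εb εν bV cV)

noncomputable def cconst (φ : ℝ → ℝ) (εb εν bV cV : ℝ) : ℝ :=
  2 / (εb * φ 1) * (2 + bbar φ εb bV / εν +
    cstar φ εb εν bV cV * bbar φ εb bV * rate φ εb 1 * (1 + rate φ εb 1 / (εb * φ 1)))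

noncomputable def Qmeas {X : Type*} [MeasurableSpace X]
    (P : ℕ → Kernel X X) (ν : ℕ → Measure X) (εν : ℝ) (k : ℕ) (x : X) : Measure X :=
  (ENNReal.ofReal (1 - εν))⁻¹ • (P k x - ENNReal.ofReal εν • ν k)

/-- Composition of the coupling kernels with target restricted to the taboo set
`E = (C̄)ᶜ × {0,1}`:  `tabooIter n (s₀, univ)` is the probability that the chain
started at `s₀` stays outside `C̄` at times `1, …, n`. -/
noncomputable def tabooIter {S : Type*} [MeasurableSpace S]
    (Pbar : ℕ → Kernel S S) {E : Set S} (hE : MeasurableSet E) : ℕ → Kernel S S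
  | 0 => Kernel.id
  | n + 1 => ((Pbar (n + 1)).restrict hE).comp (tabooIter Pbar hE n)

/-!
Let `H(t) = ∫₁ᵗ ds / φ(s)`. The map `u ↦ H⁻¹(c + H u)` is the time-`c` flow of `x' = φ(x)`, and
it is concave when `φ` is. With `V̄(x, x') = V x + V x' - 1`, the functions
`W_m = (H⁻¹(ε_b (m+1) + H ∘ V̄) - H⁻¹(ε_b (m+1))) / (ε_b φ(1))` satisfy
`r(m+1) + P̄ W_{m+1} ≤ W_m` outside `C̄`. There the drift condition gives
`P̄ V̄ ≤ V̄ - ε_b φ(V̄)`, Jensen's inequality moves the flow inside the expectation, and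
the extra time `ε_b` covers both the drift and `r(m+1) = φ(H⁻¹(ε_b (m+1))) / φ(1)`.
Summing along the chain killed on `C̄` bounds `∑ r(n) P(T₁ ≥ n)` by `W_0`. The flow's tangent at
`u = 1` then gives `W_0 ≤ r(1) (V̄ - 1) / (ε_b φ(1))`.
-/

open scoped ENNReal

section Hfun

variable {φ : ℝ → ℝ}

lemma intervalIntegrable_inv_of_monotoneOn (hmono : MonotoneOn φ (Ici 1))
    (hpos : ∀ t, 1 ≤ t → 0 < φ t) {a b : ℝ} (ha : 1 ≤ a) (hb : 1 ≤ b) :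
    IntervalIntegrable (fun s => (φ s)⁻¹) volume a b := by
  refine AntitoneOn.intervalIntegrable fun s hs t _ hst => ?_
  have hs1 : 1 ≤ s := (le_min ha hb).trans hs.1
  exact inv_anti₀ (hpos s hs1) (hmono hs1 (hs1.trans hst) hst)

lemma Hfun_sub_Hfun (hmono : MonotoneOn φ (Ici 1)) (hpos : ∀ t, 1 ≤ t → 0 < φ t)
    {a b : ℝ} (ha : 1 ≤ a) (hb : 1 ≤ b) :
    Hfun φ b - Hfun φ a = ∫ s in a..b, (φ s)⁻¹ :=
  intervalIntegral.integral_interval_sub_left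
    (intervalIntegrable_inv_of_monotoneOn hmono hpos le_rfl hb)
    (intervalIntegrable_inv_of_monotoneOn hmono hpos le_rfl ha)

lemma Hfun_sub_le_div (hmono : MonotoneOn φ (Ici 1)) (hpos : ∀ t, 1 ≤ t → 0 < φ t)
    {a b : ℝ} (ha : 1 ≤ a) (hab : a ≤ b) :
    Hfun φ b - Hfun φ a ≤ (b - a) / φ a := by
  calc Hfun φ b - Hfun φ a = ∫ s in a..b, (φ s)⁻¹ := Hfun_sub_Hfun hmono hpos ha (ha.trans hab)
    _ ≤ ∫ _ in a..b, (φ a)⁻¹ :=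
      intervalIntegral.integral_mono_on hab
        (intervalIntegrable_inv_of_monotoneOn hmono hpos ha (ha.trans hab))
        intervalIntegrable_const fun s hs =>
          inv_anti₀ (hpos a ha) (hmono ha (ha.trans hs.1) hs.1)
    _ = (b - a) / φ a := by simp [div_eq_mul_inv]

lemma div_le_Hfun_sub (hmono : MonotoneOn φ (Ici 1)) (hpos : ∀ t, 1 ≤ t → 0 < φ t)
    {a b : ℝ} (ha : 1 ≤ a) (hab : a ≤ b) :
    (b - a) / φ b ≤ Hfun φ b - Hfun φ a := by
  have hb : 1 ≤ b := ha.trans hab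
  calc (b - a) / φ b = ∫ _ in a..b, (φ b)⁻¹ := by simp [div_eq_mul_inv]
    _ ≤ ∫ s in a..b, (φ s)⁻¹ :=
      intervalIntegral.integral_mono_on hab intervalIntegrable_const
        (intervalIntegrable_inv_of_monotoneOn hmono hpos ha hb) fun s hs =>
          inv_anti₀ (hpos s (ha.trans hs.1)) (hmono (ha.trans hs.1) hb hs.2)
    _ = Hfun φ b - Hfun φ a := (Hfun_sub_Hfun hmono hpos ha hb).symm

lemma Hfun_strictMonoOn (hmono : MonotoneOn φ (Ici 1)) (hpos : ∀ t, 1 ≤ t → 0 < φ t) :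
    StrictMonoOn (Hfun φ) (Ici 1) := fun a ha b hb hab => by
  have := div_le_Hfun_sub hmono hpos ha hab.le
  have : 0 < (b - a) / φ b := div_pos (sub_pos.2 hab) (hpos b hb)
  linarith

lemma Hfun_one : Hfun φ 1 = 0 := intervalIntegral.integral_same

lemma Hfun_continuousOn (hmono : MonotoneOn φ (Ici 1)) (hpos : ∀ t, 1 ≤ t → 0 < φ t) :
    ContinuousOn (Hfun φ) (Ici 1) := fun t ht => by
  have hint := intervalIntegrable_inv_of_monotoneOn hmono hpos le_rfl
    (show (1 : ℝ) ≤ max 1 (t + 1) from le_max_left _ _)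
  refine (intervalIntegral.continuousWithinAt_primitive (b₁ := 1) (b₂ := t + 1)
    (measure_singleton t) (by rwa [min_self])).mono_of_mem_nhdsWithin ?_
  exact mem_nhdsWithin.2 ⟨Iio (t + 1), isOpen_Iio, by simp, fun s hs => ⟨hs.2, hs.1.le⟩⟩

end Hfun

structure IsConcaveRate (φ : ℝ → ℝ) : Prop where
  concaveOn : ConcaveOn ℝ (Ici 1) φ
  monotoneOn : MonotoneOn φ (Ici 1)
  differentiableAt : ∀ t, 1 ≤ t → DifferentiableAt ℝ φ t
  pos : ∀ t, 1 ≤ t → 0 < φ t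

namespace IsConcaveRate

variable {φ : ℝ → ℝ} (hφ : IsConcaveRate φ)
include hφ

lemma continuousOn : ContinuousOn φ (Ici 1) :=
  fun t ht => (hφ.differentiableAt t ht).continuousAt.continuousWithinAt

lemma Hfun_strictMonoOn : StrictMonoOn (Hfun φ) (Ici 1) :=
  _root_.Hfun_strictMonoOn hφ.monotoneOn hφ.pos

lemma Hfun_nonneg {t : ℝ} (ht : 1 ≤ t) : 0 ≤ Hfun φ t :=
  Hfun_one (φ := φ) ▸ hφ.Hfun_strictMonoOn.monotoneOn self_mem_Ici ht ht

/-- Concavity gives at most linear growth, so `∫ 1/φ` diverges. -/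
lemma exists_le_Hfun (M : ℝ) : ∃ t, 1 ≤ t ∧ M ≤ Hfun φ t := by
  set L := φ 1 + |deriv φ 1|
  have hL : 0 < L := add_pos_of_pos_of_nonneg (hφ.pos 1 le_rfl) (abs_nonneg _)
  have hgrowth : ∀ s, 1 ≤ s → φ s ≤ L * s := by
    intro s hs
    have htangent : φ s ≤ φ 1 + deriv φ 1 * (s - 1) := by
      rcases hs.eq_or_lt with rfl | hs
      · simp
      have := hφ.concaveOn.slope_le_deriv self_mem_Ici hs.le hs (hφ.differentiableAt 1 le_rfl)
      rw [slope_def_field, div_le_iff₀ (sub_pos.2 hs)] at this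
      linarith
    nlinarith [le_abs_self (deriv φ 1), abs_nonneg (deriv φ 1), hφ.pos 1 le_rfl]
  set T := Real.exp (L * |M|)
  have hT : 1 ≤ T := Real.one_le_exp (by positivity)
  refine ⟨T, hT, ?_⟩
  calc M ≤ L⁻¹ * Real.log T := by
        rw [Real.log_exp, inv_mul_cancel_left₀ hL.ne']; exact le_abs_self M
    _ = ∫ s in (1 : ℝ)..T, (L * s)⁻¹ := by
        simp only [mul_inv, intervalIntegral.integral_const_mul,
          integral_inv_of_pos one_pos (by linarith : (0 : ℝ) < T), div_one]
    _ ≤ Hfun φ T := by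
        refine intervalIntegral.integral_mono_on hT ?_
          (intervalIntegrable_inv_of_monotoneOn hφ.monotoneOn hφ.pos le_rfl hT) fun s hs => ?_
        · exact (continuousOn_inv₀.comp (continuousOn_const.mul continuousOn_id) fun s hs =>
            mul_ne_zero hL.ne' (by linarith [hs.1] : s ≠ 0)).intervalIntegrable_of_Icc hT
        · exact inv_anti₀ (hφ.pos s hs.1) (hgrowth s hs.1)

lemma exists_Hfun_eq {y : ℝ} (hy : 0 ≤ y) : ∃ t ∈ Ici 1, Hfun φ t = y := by
  obtain ⟨T, hT, hyT⟩ := hφ.exists_le_Hfun y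
  obtain ⟨t, ht, rfl⟩ := intermediate_value_Icc hT
    ((Hfun_continuousOn hφ.monotoneOn hφ.pos).mono Icc_subset_Ici_self)
    ⟨Hfun_one (φ := φ) ▸ hy, hyT⟩
  exact ⟨t, ht.1, rfl⟩

lemma one_le_Hinv {y : ℝ} (hy : 0 ≤ y) : 1 ≤ Hinv φ y :=
  Function.invFunOn_mem (hφ.exists_Hfun_eq hy)

lemma Hfun_Hinv {y : ℝ} (hy : 0 ≤ y) : Hfun φ (Hinv φ y) = y :=
  Function.invFunOn_eq (hφ.exists_Hfun_eq hy)

lemma le_Hinv_iff {y t : ℝ} (hy : 0 ≤ y) (ht : 1 ≤ t) : t ≤ Hinv φ y ↔ Hfun φ t ≤ y := by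
  rw [← hφ.Hfun_strictMonoOn.le_iff_le ht (hφ.one_le_Hinv hy), hφ.Hfun_Hinv hy]

lemma Hinv_le_iff {y t : ℝ} (hy : 0 ≤ y) (ht : 1 ≤ t) : Hinv φ y ≤ t ↔ y ≤ Hfun φ t := by
  rw [← hφ.Hfun_strictMonoOn.le_iff_le (hφ.one_le_Hinv hy) ht, hφ.Hfun_Hinv hy]

lemma Hinv_le_Hinv {y₁ y₂ : ℝ} (hy₁ : 0 ≤ y₁) (h : y₁ ≤ y₂) : Hinv φ y₁ ≤ Hinv φ y₂ := by
  rwa [hφ.Hinv_le_iff hy₁ (hφ.one_le_Hinv (hy₁.trans h)), hφ.Hfun_Hinv (hy₁.trans h)]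

lemma Hinv_zero : Hinv φ 0 = 1 :=
  le_antisymm ((hφ.Hinv_le_iff le_rfl le_rfl).2 Hfun_one.ge) (hφ.one_le_Hinv le_rfl)

lemma one_lt_Hinv {y : ℝ} (hy : 0 < y) : 1 < Hinv φ y := by
  refine (hφ.one_le_Hinv hy.le).lt_of_ne fun h => hy.ne' ?_
  rw [← hφ.Hfun_Hinv hy.le, ← h, Hfun_one]

lemma rate_zero (εb : ℝ) : rate φ εb 0 = 1 := by
  simp [rate, hφ.Hinv_zero, (hφ.pos 1 le_rfl).ne']

lemma rate_nonneg {εb : ℝ} (hεb : 0 ≤ εb) (n : ℕ) : 0 ≤ rate φ εb n :=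
  div_nonneg (hφ.pos _ (hφ.one_le_Hinv (by positivity))).le (hφ.pos 1 le_rfl).le

lemma add_mul_le_Hinv_add {c ε : ℝ} (hc : 0 ≤ c) (hε : 0 ≤ ε) :
    Hinv φ c + ε * φ (Hinv φ c) ≤ Hinv φ (c + ε) := by
  have hA := hφ.one_le_Hinv hc
  have hφA := hφ.pos _ hA
  rw [hφ.le_Hinv_iff (by positivity) (by nlinarith)]
  have := Hfun_sub_le_div hφ.monotoneOn hφ.pos hA
    (le_add_of_nonneg_right (by positivity : 0 ≤ ε * φ (Hinv φ c)))
  rw [add_sub_cancel_left, mul_div_cancel_right₀ _ hφA.ne', hφ.Hfun_Hinv hc] at this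
  linarith

lemma hasDerivAt_Hfun {t : ℝ} (ht : 1 < t) : HasDerivAt (Hfun φ) (φ t)⁻¹ t := by
  have hcont : ContinuousOn (fun s => (φ s)⁻¹) (Ici 1) :=
    hφ.continuousOn.inv₀ fun s hs => (hφ.pos s hs).ne'
  exact intervalIntegral.integral_hasDerivAt_right
    (intervalIntegrable_inv_of_monotoneOn hφ.monotoneOn hφ.pos le_rfl ht.le)
    ((hcont.mono (Ioi_subset_Ici le_rfl)).stronglyMeasurableAtFilter isOpen_Ioi t ht)
    (hcont.continuousAt (Ici_mem_nhds ht))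

lemma continuousAt_Hinv {y : ℝ} (hy : 0 < y) : ContinuousAt (Hinv φ) y := by
  refine continuousAt_of_monotoneOn_of_image_mem_nhds
    (fun a ha b _ hab => hφ.Hinv_le_Hinv (le_of_lt ha) hab) (Ioi_mem_nhds hy) ?_
  refine mem_of_superset (Ioi_mem_nhds (hφ.one_lt_Hinv hy)) fun t (ht : 1 < t) => ?_
  have hHt : 0 < Hfun φ t := by
    simpa [Hfun_one] using hφ.Hfun_strictMonoOn self_mem_Ici ht.le ht
  refine ⟨Hfun φ t, hHt, ?_⟩
  exact hφ.Hfun_strictMonoOn.injOn (hφ.one_le_Hinv hHt.le) ht.le (hφ.Hfun_Hinv hHt.le)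

lemma hasDerivAt_Hinv {y : ℝ} (hy : 0 < y) : HasDerivAt (Hinv φ) (φ (Hinv φ y)) y := by
  have hA := hφ.one_lt_Hinv hy
  simpa using HasDerivAt.of_local_left_inverse (hφ.continuousAt_Hinv hy)
    (hφ.hasDerivAt_Hfun hA) (inv_ne_zero (hφ.pos _ hA.le).ne')
    (eventually_gt_nhds hy |>.mono fun z hz => hφ.Hfun_Hinv hz.le)

end IsConcaveRate

/-- `driftFlow φ c u` is the position at time `c` of the solution of `x' = φ x` started at `u`. -/
noncomputable def driftFlow (φ : ℝ → ℝ) (c u : ℝ) : ℝ := Hinv φ (c + Hfun φ u)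

lemma driftFlow_one (φ : ℝ → ℝ) (c : ℝ) : driftFlow φ c 1 = Hinv φ c := by
  simp [driftFlow, Hfun_one]

namespace IsConcaveRate

variable {φ : ℝ → ℝ} (hφ : IsConcaveRate φ) {c : ℝ}
include hφ

lemma le_driftFlow (hc : 0 ≤ c) {u : ℝ} (hu : 1 ≤ u) : u ≤ driftFlow φ c u :=
  (hφ.le_Hinv_iff (add_nonneg hc (hφ.Hfun_nonneg hu)) hu).2 (le_add_of_nonneg_left hc)

lemma one_le_driftFlow (hc : 0 ≤ c) {u : ℝ} (hu : 1 ≤ u) : 1 ≤ driftFlow φ c u :=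
  hu.trans (hφ.le_driftFlow hc hu)

lemma driftFlow_monotoneOn (hc : 0 ≤ c) : MonotoneOn (driftFlow φ c) (Ici 1) :=
  fun u hu _ hv huv => hφ.Hinv_le_Hinv (add_nonneg hc (hφ.Hfun_nonneg hu))
    (by linarith [hφ.Hfun_strictMonoOn.monotoneOn hu hv huv])

/-- The flow needs time at least `ε` to climb from `w` to `v`, its speed there being at most
`φ v`. -/
lemma driftFlow_add_le {a ε v w : ℝ} (ha : 0 ≤ a) (hε : 0 ≤ ε) (hv : 1 ≤ v) (hw : 1 ≤ w)
    (hwv : w ≤ v - ε * φ v) : driftFlow φ (a + ε) w ≤ driftFlow φ a v := by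
  have hφv := hφ.pos v hv
  have hH : Hfun φ w + ε ≤ Hfun φ v := by
    have := div_le_Hfun_sub hφ.monotoneOn hφ.pos hw
      (hwv.trans (sub_le_self _ (mul_nonneg hε hφv.le)))
    have : ε ≤ (v - w) / φ v := by rw [le_div_iff₀ hφv]; linarith
    linarith
  exact hφ.Hinv_le_Hinv (by linarith [hφ.Hfun_nonneg hw]) (by linarith)

lemma continuousOn_driftFlow (hc : 0 < c) : ContinuousOn (driftFlow φ c) (Ici 1) := fun u hu =>
  (hφ.continuousAt_Hinv (by linarith [hφ.Hfun_nonneg hu])).comp_continuousWithinAt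
    ((continuousOn_const.add (Hfun_continuousOn hφ.monotoneOn hφ.pos)) u hu)

lemma hasDerivAt_driftFlow (hc : 0 ≤ c) {u : ℝ} (hu : 1 < u) :
    HasDerivAt (driftFlow φ c) (φ (driftFlow φ c u) / φ u) u := by
  have hH : 0 < Hfun φ u := by
    simpa [Hfun_one] using hφ.Hfun_strictMonoOn self_mem_Ici hu.le hu
  rw [div_eq_mul_inv]
  exact (hφ.hasDerivAt_Hinv (by linarith)).comp u ((hφ.hasDerivAt_Hfun hu).const_add c)

/-- `φ (driftFlow φ c u) / φ u` is the derivative of the flow; it decreases because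
`deriv φ` does and the flow moves to the right. -/
lemma antitoneOn_div_driftFlow (hc : 0 < c) :
    AntitoneOn (fun u => φ (driftFlow φ c u) / φ u) (Ici 1) := by
  have hd : ∀ u, 1 < u → HasDerivAt (fun u => φ (driftFlow φ c u) / φ u)
      (φ (driftFlow φ c u) * (deriv φ (driftFlow φ c u) - deriv φ u) / φ u ^ 2) u := by
    intro u hu
    have h := ((hφ.differentiableAt _ (hφ.one_le_driftFlow hc.le hu.le)).hasDerivAt.comp u
      (hφ.hasDerivAt_driftFlow hc.le hu)).div (hφ.differentiableAt u hu.le).hasDerivAt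
      (hφ.pos u hu.le).ne'
    refine h.congr_deriv ?_
    rw [Function.comp_apply, mul_assoc, div_mul_cancel₀ _ (hφ.pos u hu.le).ne']
    ring
  refine antitoneOn_of_deriv_nonpos (convex_Ici 1) ?_ ?_ ?_
  · exact (hφ.continuousOn.comp (hφ.continuousOn_driftFlow hc)
      fun u hu => hφ.one_le_driftFlow hc.le hu).div hφ.continuousOn fun u hu => (hφ.pos u hu).ne'
  · rw [interior_Ici]
    exact fun u hu => (hd u hu).differentiableAt.differentiableWithinAt
  · rw [interior_Ici]
    intro u hu
    rw [(hd u hu).deriv]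
    have hu1 : (1 : ℝ) ≤ u := le_of_lt hu
    refine div_nonpos_of_nonpos_of_nonneg (mul_nonpos_of_nonneg_of_nonpos
      (hφ.pos _ (hφ.one_le_driftFlow hc.le hu1)).le (sub_nonpos.2 ?_)) (sq_nonneg _)
    exact hφ.concaveOn.antitoneOn_deriv (fun t ht => hφ.differentiableAt t ht) hu1
      (hφ.one_le_driftFlow hc.le hu1) (hφ.le_driftFlow hc.le hu1)

lemma concaveOn_driftFlow (hc : 0 < c) : ConcaveOn ℝ (Ici 1) (driftFlow φ c) := by
  refine AntitoneOn.concaveOn_of_deriv (convex_Ici 1) (hφ.continuousOn_driftFlow hc) ?_ ?_ <;>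
    rw [interior_Ici]
  · exact fun u hu => (hφ.hasDerivAt_driftFlow hc.le hu).differentiableAt.differentiableWithinAt
  · intro u hu v hv huv
    rw [(hφ.hasDerivAt_driftFlow hc.le hu).deriv, (hφ.hasDerivAt_driftFlow hc.le hv).deriv]
    exact hφ.antitoneOn_div_driftFlow hc (mem_Ioi.1 hu).le (mem_Ioi.1 hv).le huv

lemma driftFlow_le (hc : 0 < c) {v : ℝ} (hv : 1 ≤ v) :
    driftFlow φ c v ≤ Hinv φ c + φ (Hinv φ c) / φ 1 * (v - 1) := by
  have := (convex_Ici 1).image_sub_le_mul_sub_of_deriv_le (hφ.continuousOn_driftFlow hc)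
    (C := φ (Hinv φ c) / φ 1)
    (by
      rw [interior_Ici]
      exact fun u hu => (hφ.hasDerivAt_driftFlow hc.le hu).differentiableAt.differentiableWithinAt)
    (fun u hu => by
      rw [interior_Ici] at hu
      rw [(hφ.hasDerivAt_driftFlow hc.le hu).deriv, ← driftFlow_one φ c]
      exact hφ.antitoneOn_div_driftFlow hc self_mem_Ici (mem_Ioi.1 hu).le (mem_Ioi.1 hu).le)
    1 self_mem_Ici v hv hv
  rw [driftFlow_one] at this
  linarith

section Integral

variable {α : Type*} [MeasurableSpace α] {f : α → ℝ}

lemma measurable_driftFlow_comp (hc : 0 ≤ c) (hf : Measurable f) (hf1 : ∀ x, 1 ≤ f x) :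
    Measurable fun x => driftFlow φ c (f x) := by
  have hmono : Monotone fun v => driftFlow φ c (max v 1) := fun v w hvw =>
    hφ.driftFlow_monotoneOn hc (le_max_right v 1) (le_max_right w 1) (max_le_max_right 1 hvw)
  convert hmono.measurable.comp hf using 1
  exact funext fun x => by simp [max_eq_left (hf1 x)]

lemma integrable_driftFlow_comp {μ : Measure α} [IsFiniteMeasure μ] (hc : 0 < c)
    (hf : Integrable f μ) (hfm : Measurable f) (hf1 : ∀ x, 1 ≤ f x) :
    Integrable (fun x => driftFlow φ c (f x)) μ := by
  refine Integrable.mono' ((integrable_const (Hinv φ c)).add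
    ((hf.sub (integrable_const 1)).const_mul (φ (Hinv φ c) / φ 1)))
    (hφ.measurable_driftFlow_comp hc.le hfm hf1).aestronglyMeasurable (ae_of_all _ fun x => ?_)
  rw [Real.norm_of_nonneg (by linarith [hφ.one_le_driftFlow hc.le (hf1 x)])]
  exact hφ.driftFlow_le hc (hf1 x)

lemma integral_driftFlow_le {μ : Measure α} [IsProbabilityMeasure μ] {a ε v : ℝ}
    (ha : 0 ≤ a) (hε : 0 < ε) (hf : Integrable f μ) (hfm : Measurable f) (hf1 : ∀ x, 1 ≤ f x)
    (hv : 1 ≤ v) (hfv : ∫ x, f x ∂μ ≤ v - ε * φ v) :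
    ∫ x, driftFlow φ (a + ε) (f x) ∂μ ≤ driftFlow φ a v := by
  have hc : 0 < a + ε := by linarith
  have hmean : 1 ≤ ∫ x, f x ∂μ := by
    simpa using integral_mono (integrable_const 1) hf hf1
  calc ∫ x, driftFlow φ (a + ε) (f x) ∂μ ≤ driftFlow φ (a + ε) (∫ x, f x ∂μ) :=
        (hφ.concaveOn_driftFlow hc).le_map_integral (hφ.continuousOn_driftFlow hc) isClosed_Ici
          (ae_of_all _ hf1) hf (hφ.integrable_driftFlow_comp hc hf hfm hf1)
    _ ≤ driftFlow φ a v := hφ.driftFlow_add_le ha hε.le hv hmean hfv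

end Integral

end IsConcaveRate

/-- The function `W_m` of the sketch above, as a function of `V̄`. -/
noncomputable def rateLyapunov (φ : ℝ → ℝ) (εb : ℝ) (m : ℕ) (v : ℝ) : ℝ :=
  (driftFlow φ (εb * (m + 1)) v - Hinv φ (εb * (m + 1))) / (εb * φ 1)

namespace IsConcaveRate

variable {φ : ℝ → ℝ} (hφ : IsConcaveRate φ) {εb : ℝ}
include hφ

lemma rateLyapunov_nonneg (hεb : 0 < εb) (m : ℕ) {v : ℝ} (hv : 1 ≤ v) :
    0 ≤ rateLyapunov φ εb m v := by
  have hc : 0 ≤ εb * (m + 1) := by positivity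
  have := hφ.driftFlow_monotoneOn hc self_mem_Ici hv hv
  rw [driftFlow_one] at this
  exact div_nonneg (sub_nonneg.2 this) (mul_pos hεb (hφ.pos 1 le_rfl)).le

lemma rateLyapunov_zero_le (hεb : 0 < εb) {v : ℝ} (hv : 1 ≤ v) :
    rateLyapunov φ εb 0 v ≤ rate φ εb 1 / (εb * φ 1) * (v - 1) := by
  have := hφ.driftFlow_le hεb hv
  simp only [rateLyapunov, rate, Nat.cast_zero, Nat.cast_one, zero_add, mul_one]
  rw [div_mul_eq_mul_div]
  gcongr
  · exact (mul_pos hεb (hφ.pos 1 le_rfl)).le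
  · linarith

variable {α : Type*} [MeasurableSpace α] {f : α → ℝ}

lemma measurable_rateLyapunov_comp (hεb : 0 < εb) (m : ℕ) (hf : Measurable f)
    (hf1 : ∀ x, 1 ≤ f x) : Measurable fun x => rateLyapunov φ εb m (f x) :=
  ((hφ.measurable_driftFlow_comp (by positivity) hf hf1).sub_const _).div_const _

lemma integrable_rateLyapunov_comp {μ : Measure α} [IsFiniteMeasure μ] (hεb : 0 < εb) (m : ℕ)
    (hf : Integrable f μ) (hfm : Measurable f) (hf1 : ∀ x, 1 ≤ f x) :
    Integrable (fun x => rateLyapunov φ εb m (f x)) μ :=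
  ((hφ.integrable_driftFlow_comp (by positivity) hf hfm hf1).sub (integrable_const _)).div_const _

lemma rate_succ_add_integral_rateLyapunov_le {μ : Measure α} [IsProbabilityMeasure μ]
    (hεb : 0 < εb) (m : ℕ) (hf : Integrable f μ) (hfm : Measurable f) (hf1 : ∀ x, 1 ≤ f x)
    {v : ℝ} (hv : 1 ≤ v) (hfv : ∫ x, f x ∂μ ≤ v - εb * φ v) :
    rate φ εb (m + 1) + ∫ x, rateLyapunov φ εb (m + 1) (f x) ∂μ ≤ rateLyapunov φ εb m v := by
  set a := εb * (m + 1)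
  have ha : 0 ≤ a := by positivity
  have hsucc : εb * ((m + 1 : ℕ) + 1 : ℝ) = a + εb := by push_cast; ring
  have hincr := hφ.add_mul_le_Hinv_add ha hεb.le
  have hflow := hφ.integral_driftFlow_le ha hεb hf hfm hf1 hv hfv
  have hrate : rate φ εb (m + 1) = εb * φ (Hinv φ a) / (εb * φ 1) := by
    rw [rate, mul_div_mul_left _ _ hεb.ne']
    simp [a]
  simp only [rateLyapunov, hsucc]
  rw [integral_div, integral_sub (hφ.integrable_driftFlow_comp (by positivity) hf hfm hf1)
    (integrable_const _), integral_const, probReal_univ, one_smul, hrate, ← add_div]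
  gcongr
  · exact (mul_pos hεb (hφ.pos 1 le_rfl)).le
  · linarith

end IsConcaveRate

lemma ConcaveOn.map_add_sub_add_le {f : ℝ → ℝ} {c a b : ℝ} (hf : ConcaveOn ℝ (Ici c) f)
    (ha : c ≤ a) (hb : c ≤ b) : f (a + b - c) + f c ≤ f a + f b := by
  rcases (add_nonneg (sub_nonneg.2 ha) (sub_nonneg.2 hb)).eq_or_lt with h | h
  · obtain rfl : a = c := by linarith
    obtain rfl : b = a := by linarith
    simp
  -- `a` and `b` are the two convex combinations of `c` and `a + b - c` with swapped weights
  set t := (a - c) / (a + b - c - c)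
  have hd : a + b - c ∈ Ici c := by simp only [mem_Ici]; linarith
  have hne : a + b - c - c ≠ 0 := by linarith
  have ht0 : 0 ≤ t := div_nonneg (sub_nonneg.2 ha) (by linarith)
  have ht1 : 0 ≤ 1 - t := by
    rw [sub_nonneg, div_le_one (by linarith)]; linarith
  have h₁ := hf.2 self_mem_Ici hd ht1 ht0 (by ring)
  have h₂ := hf.2 self_mem_Ici hd ht0 ht1 (by ring)
  have e₁ : (1 - t) * c + t * (a + b - c) = a := by
    simp only [t]; field_simp; ring
  have e₂ : t * c + (1 - t) * (a + b - c) = b := by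
    simp only [t]; field_simp; ring
  simp only [smul_eq_mul, e₁, e₂] at h₁ h₂
  linarith

/-- Outside `C × C` at most one of the two `bV` terms is present and `(1 - εb) φ` absorbs it;
concavity gives `φ (V y + V y' - 1) ≤ φ (V y) + φ (V y')`. -/
lemma IsConcaveRate.integral_add_sub_one_prod_le {X : Type*} [MeasurableSpace X] {φ : ℝ → ℝ}
    (hφ : IsConcaveRate φ) {C : Set X} {V : X → ℝ} (hV1 : ∀ x, 1 ≤ V x) {εb bV : ℝ}
    (hεb : εb ∈ Ioo 0 1) (hout : ∀ x ∉ C, bV / (1 - εb) ≤ φ (V x)) {y y' : X}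
    (hyy : ¬(y ∈ C ∧ y' ∈ C)) {μ ν : Measure X} [IsProbabilityMeasure μ] [IsProbabilityMeasure ν]
    (hμ : Integrable V μ) (hν : Integrable V ν)
    (hdμ : ∫ x, V x ∂μ ≤ V y - φ (V y) + bV * C.indicator 1 y)
    (hdν : ∫ x, V x ∂ν ≤ V y' - φ (V y') + bV * C.indicator 1 y') :
    ∫ p, (V p.1 + V p.2 - 1) ∂(μ.prod ν) ≤ (V y + V y' - 1) - εb * φ (V y + V y' - 1) := by
  obtain ⟨hεb0, hεb1⟩ := hεb
  have hφy := hφ.pos _ (hV1 y)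
  have hφy' := hφ.pos _ (hV1 y')
  have hφ1 := hφ.pos 1 le_rfl
  have hchord := hφ.concaveOn.map_add_sub_add_le (hV1 y) (hV1 y')
  have hbV : bV ≤ (1 - εb) * (φ (V y) + φ (V y')) := by
    rcases not_and_or.1 hyy with h | h <;>
    · have := (div_le_iff₀ (sub_pos.2 hεb1)).1 (hout _ h)
      nlinarith
  have hind : bV * C.indicator 1 y + bV * C.indicator 1 y' ≤ (1 - εb) * (φ (V y) + φ (V y')) := by
    have : 0 ≤ (1 - εb) * (φ (V y) + φ (V y')) := by nlinarith
    by_cases hy : y ∈ C <;> by_cases hy' : y' ∈ C <;> simp [hy, hy'] at hyy ⊢ <;> linarith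
  have hsplit : ∫ p, (V p.1 + V p.2 - 1) ∂(μ.prod ν) = ∫ x, V x ∂μ + ∫ x, V x ∂ν - 1 := by
    have hsum : Integrable (fun p : X × X => V p.1 + V p.2) (μ.prod ν) :=
      (hμ.comp_fst ν).add (hν.comp_snd μ)
    rw [integral_sub hsum (integrable_const 1),
      integral_add (hμ.comp_fst ν) (hν.comp_snd μ), integral_fun_fst, integral_fun_snd]
    simp
  rw [hsplit]
  nlinarith

/-- The comparison theorem of Meyn and Tweedie for the chain killed outside `E`. -/
theorem tsum_mul_tabooIter_le {S : Type*} [MeasurableSpace S] (Pbar : ℕ → Kernel S S)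
    {E : Set S} (hE : MeasurableSet E) (r : ℕ → ℝ≥0∞) (W : ℕ → S → ℝ≥0∞)
    (hW : ∀ n, Measurable (W n))
    (hstep : ∀ n s, r n + ∫⁻ z, W (n + 1) z ∂((Pbar (n + 1)).restrict hE s) ≤ W n s) (s : S) :
    ∑' n, r n * tabooIter Pbar hE n s univ ≤ W 0 s := by
  have hpartial : ∀ N, ∑ n ∈ Finset.range N, r n * tabooIter Pbar hE n s univ +
      ∫⁻ z, W N z ∂(tabooIter Pbar hE N s) ≤ W 0 s := by
    intro N
    induction N with
    | zero => simp [tabooIter, Kernel.id_apply, lintegral_dirac' _ (hW 0)]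
    | succ N ih =>
      calc ∑ n ∈ Finset.range (N + 1), r n * tabooIter Pbar hE n s univ +
            ∫⁻ z, W (N + 1) z ∂(tabooIter Pbar hE (N + 1) s)
          = ∑ n ∈ Finset.range N, r n * tabooIter Pbar hE n s univ +
            ∫⁻ z, (r N + ∫⁻ w, W (N + 1) w ∂((Pbar (N + 1)).restrict hE z))
              ∂(tabooIter Pbar hE N s) := by
            rw [Finset.sum_range_succ, add_assoc, lintegral_add_left measurable_const,
              lintegral_const, tabooIter, Kernel.lintegral_comp _ _ _ (hW (N + 1))]
        _ ≤ ∑ n ∈ Finset.range N, r n * tabooIter Pbar hE n s univ +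
            ∫⁻ z, W N z ∂(tabooIter Pbar hE N s) := by
            gcongr with z
            exact hstep N z
        _ ≤ W 0 s := ih
  exact ENNReal.tsum_le_of_sum_range_le fun N => le_self_add.trans (hpartial N)

section Coupling

variable {X : Type*} [MeasurableSpace X]

open Classical in
/-- The value `⊤` off `(C ×ˢ C)ᶜ ×ˢ {false}` makes the one-step inequality trivial there, and from
that set the kernel killed on `C ×ˢ C` charges only that set. -/
noncomputable def couplingLyapunov (φ : ℝ → ℝ) (εb : ℝ) (V : X → ℝ) (C : Set X) (m : ℕ)
    (s : (X × X) × Bool) : ℝ≥0∞ :=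
  if s ∈ (C ×ˢ C)ᶜ ×ˢ {false} then ENNReal.ofReal (rateLyapunov φ εb m (V s.1.1 + V s.1.2 - 1))
  else ⊤

variable {φ : ℝ → ℝ} {εb : ℝ} {V : X → ℝ} {C : Set X}

lemma measurable_couplingLyapunov (hφ : IsConcaveRate φ) (hεb : 0 < εb) (hV : Measurable V)
    (hV1 : ∀ x, 1 ≤ V x) (hC : MeasurableSet C) (m : ℕ) :
    Measurable (couplingLyapunov φ εb V C m) := by
  have hVbar : Measurable fun s : (X × X) × Bool => V s.1.1 + V s.1.2 - 1 := by fun_prop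
  exact Measurable.ite ((hC.prod hC).compl.prod (measurableSet_singleton false))
    (hφ.measurable_rateLyapunov_comp hεb m hVbar
      fun s => by linarith [hV1 s.1.1, hV1 s.1.2]).ennreal_ofReal measurable_const

lemma lintegral_restrict_map_couplingLyapunov_le (μ : Measure (X × X))
    (hE : MeasurableSet {s : (X × X) × Bool | ¬(s.1.1 ∈ C ∧ s.1.2 ∈ C)}) (m : ℕ) :
    ∫⁻ z, couplingLyapunov φ εb V C m z ∂((μ.map fun p => (p, false)).restrict
      {s : (X × X) × Bool | ¬(s.1.1 ∈ C ∧ s.1.2 ∈ C)}) ≤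
      ∫⁻ p, ENNReal.ofReal (rateLyapunov φ εb m (V p.1 + V p.2 - 1)) ∂μ := by
  rw [Measure.restrict_map (by fun_prop) hE]
  refine (lintegral_map_le _ _).trans ((setLIntegral_mono' (hE.preimage (by fun_prop))
    fun p hp => ?_).trans (setLIntegral_le_lintegral _ _))
  simp_all [couplingLyapunov]

lemma couplingLyapunov_step (hφ : IsConcaveRate φ) (hεb : εb ∈ Ioo 0 1) {bV : ℝ}
    {P : ℕ → Kernel X X} (hP : ∀ k, IsMarkovKernel (P k)) (hV : Measurable V)
    (hV1 : ∀ x, 1 ≤ V x) (hVint : ∀ k, 1 ≤ k → ∀ x, Integrable V (P k x))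
    (hdrift : ∀ k, 1 ≤ k → ∀ x, ∫ y, V y ∂(P k x) ≤ V x - φ (V x) + bV * C.indicator 1 x)
    (hout : ∀ x ∉ C, bV / (1 - εb) ≤ φ (V x))
    {Pbar : ℕ → Kernel ((X × X) × Bool) ((X × X) × Bool)}
    (hbar_out : ∀ k, 1 ≤ k → ∀ x x' : X, ¬(x ∈ C ∧ x' ∈ C) →
      Pbar k ((x, x'), false) = (((P k x).prod (P k x')).map fun p => (p, false)))
    (hE : MeasurableSet {s : (X × X) × Bool | ¬(s.1.1 ∈ C ∧ s.1.2 ∈ C)}) (m : ℕ)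
    (s : (X × X) × Bool) :
    ENNReal.ofReal (rate φ εb (m + 1)) +
        ∫⁻ z, couplingLyapunov φ εb V C (m + 1) z ∂((Pbar (m + 1)).restrict hE s) ≤
      couplingLyapunov φ εb V C m s := by
  by_cases hs : s ∈ (C ×ˢ C)ᶜ ×ˢ {false}
  swap
  · simp [couplingLyapunov, hs]
  obtain ⟨⟨y, y'⟩, b⟩ := s
  simp only [mem_prod, mem_compl_iff, mem_singleton_iff] at hs
  obtain ⟨hyy, rfl⟩ := hs
  have hk : 1 ≤ m + 1 := Nat.le_add_left 1 m
  have := hP (m + 1)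
  set μ := (P (m + 1) y).prod (P (m + 1) y')
  set Vbar : X × X → ℝ := fun p => V p.1 + V p.2 - 1
  have hVbar : Measurable Vbar := by fun_prop
  have hVbar1 : ∀ p, 1 ≤ Vbar p := fun p => by linarith [hV1 p.1, hV1 p.2]
  have hVbar_int : Integrable Vbar μ :=
    (((hVint _ hk y).comp_fst _).add ((hVint _ hk y').comp_snd _)).sub (integrable_const 1)
  have hW_int := hφ.integrable_rateLyapunov_comp hεb.1 (m + 1) hVbar_int hVbar hVbar1
  have hW_nonneg : ∀ p, 0 ≤ rateLyapunov φ εb (m + 1) (Vbar p) :=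
    fun p => hφ.rateLyapunov_nonneg hεb.1 _ (hVbar1 p)
  have hdecrease := hφ.rate_succ_add_integral_rateLyapunov_le hεb.1 m hVbar_int hVbar hVbar1
    (hVbar1 (y, y')) (hφ.integral_add_sub_one_prod_le hV1 hεb hout hyy (hVint _ hk y)
      (hVint _ hk y') (hdrift _ hk y) (hdrift _ hk y'))
  have hkilled : ∫⁻ z, couplingLyapunov φ εb V C (m + 1) z
      ∂((Pbar (m + 1)).restrict hE ((y, y'), false)) ≤
      ∫⁻ p, ENNReal.ofReal (rateLyapunov φ εb (m + 1) (Vbar p)) ∂μ := by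
    rw [Kernel.restrict_apply, hbar_out _ hk y y' hyy]
    exact lintegral_restrict_map_couplingLyapunov_le μ hE (m + 1)
  calc _ ≤ ENNReal.ofReal (rate φ εb (m + 1)) +
        ∫⁻ p, ENNReal.ofReal (rateLyapunov φ εb (m + 1) (Vbar p)) ∂μ := by gcongr
    _ = ENNReal.ofReal (rate φ εb (m + 1) + ∫ p, rateLyapunov φ εb (m + 1) (Vbar p) ∂μ) := by
        rw [← ofReal_integral_eq_lintegral_ofReal hW_int (ae_of_all _ hW_nonneg),
          ENNReal.ofReal_add (hφ.rate_nonneg hεb.1.le _) (integral_nonneg hW_nonneg)]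
    _ ≤ ENNReal.ofReal (rateLyapunov φ εb m (Vbar (y, y'))) := ENNReal.ofReal_le_ofReal hdecrease
    _ = couplingLyapunov φ εb V C m ((y, y'), false) := by simp [couplingLyapunov, hyy, Vbar]

end Coupling

/-- `E[∑_{n=0}^{T₁} r(n)]` is written as `∑_{n≥0} r(n) P(T₁ ≥ n)
= r(0) + ∑_{m≥0} r(m+1) 1_{C̄ᶜ}(x, x') (tabooIter m)((x, x', 0), univ)`. -/
theorem statement15_general {X : Type*} [MeasurableSpace X]
    (P : ℕ → Kernel X X) (hP : ∀ k, IsMarkovKernel (P k))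
    (C : Set X) (hC : MeasurableSet C)
    (V : X → ℝ) (hVmeas : Measurable V) (hV1 : ∀ x, 1 ≤ V x)
    (φ : ℝ → ℝ)
    (hφconc : ConcaveOn ℝ (Set.Ici 1) φ)
    (hφmono : MonotoneOn φ (Set.Ici 1))
    (hφdiff : ∀ t, 1 ≤ t → DifferentiableAt ℝ φ t)
    (hφpos : ∀ t, 1 ≤ t → 0 < φ t)
    (εb : ℝ) (hεb : εb ∈ Set.Ioo (0:ℝ) 1)
    (bV : ℝ)
    (hVint : ∀ k, 1 ≤ k → ∀ x, Integrable V (P k x))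
    (hdrift : ∀ k, 1 ≤ k → ∀ x,
      ∫ y, V y ∂(P k x) ≤ V x - φ (V x) + bV * C.indicator 1 x)
    (hout : ∀ x ∉ C, bV / (1 - εb) ≤ φ (V x))
    -- the coupling construction (Definition 5.1); the flag `true` indicates coupling:
    (Pbar : ℕ → Kernel ((X × X) × Bool) ((X × X) × Bool))
    (hbar_out : ∀ k, 1 ≤ k → ∀ x x' : X, ¬(x ∈ C ∧ x' ∈ C) →
      Pbar k ((x, x'), false) =
        (((P k x).prod (P k x')).map fun p => (p, false)))
    (E : Set ((X × X) × Bool)) (hE : MeasurableSet E)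
    (hEdef : E = {s : (X × X) × Bool | ¬(s.1.1 ∈ C ∧ s.1.2 ∈ C)}) :
    ∀ x x' : X,
      ENNReal.ofReal (rate φ εb 0) +
        ∑' m : ℕ, ENNReal.ofReal (rate φ εb (m + 1)) *
          (Set.indicator ((C ×ˢ C)ᶜ) (fun _ => (1 : ENNReal)) (x, x') *
            tabooIter Pbar hE m ((x, x'), false) Set.univ) ≤
      ENNReal.ofReal (1 + rate φ εb 1 / (εb * φ 1) * (V x + V x' - 2) *
        Set.indicator ((C ×ˢ C)ᶜ) 1 (x, x')) := by
  have hφ : IsConcaveRate φ := ⟨hφconc, hφmono, hφdiff, hφpos⟩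
  intro x x'
  by_cases hxx : (x, x') ∈ C ×ˢ C
  · simp [hxx, hφ.rate_zero]
  subst hEdef
  have hV₀ : 1 ≤ V x + V x' - 1 := by linarith [hV1 x, hV1 x']
  have hbound := tsum_mul_tabooIter_le Pbar hE (fun m => ENNReal.ofReal (rate φ εb (m + 1)))
    (couplingLyapunov φ εb V C) (measurable_couplingLyapunov hφ hεb.1 hVmeas hV1 hC)
    (couplingLyapunov_step hφ hεb hP hVmeas hV1 hVint hdrift hout hbar_out hE) ((x, x'), false)
  have hW₀ : couplingLyapunov φ εb V C 0 ((x, x'), false) =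
      ENNReal.ofReal (rateLyapunov φ εb 0 (V x + V x' - 1)) := by
    simp [couplingLyapunov, hxx]
  rw [hW₀] at hbound
  simp only [indicator_of_mem (mem_compl hxx), one_mul, mul_one, Pi.one_apply, hφ.rate_zero]
  calc ENNReal.ofReal 1 + ∑' m, ENNReal.ofReal (rate φ εb (m + 1)) *
          tabooIter Pbar hE m ((x, x'), false) univ
      ≤ ENNReal.ofReal 1 + ENNReal.ofReal (rate φ εb 1 / (εb * φ 1) * (V x + V x' - 2)) := by
        gcongr
        exact hbound.trans (ENNReal.ofReal_le_ofReal
          ((hφ.rateLyapunov_zero_le hεb.1 hV₀).trans_eq (by ring)))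
    _ = _ := (ENNReal.ofReal_add zero_le_one (mul_nonneg (div_nonneg (hφ.rate_nonneg hεb.1.le 1)
          (mul_pos hεb.1 (hφpos 1 le_rfl)).le) (by linarith))).symm

/-- Lemma 5.6.  The expectation `E[∑_{n=0}^{T₁} r(n)]`, where `T₁` is the first
hitting time of `C̄ = C × C` by `(X_n, X'_n)`, equals
`∑_{n≥0} r(n) P(T₁ ≥ n) = r(0) + ∑_{m≥0} r(m+1) 1_E(s₀) (tabooIter m)(s₀, univ)`. -/
theorem statement15 {X : Type*} [MeasurableSpace X]
    (P : ℕ → Kernel X X) (hP : ∀ k, IsMarkovKernel (P k))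
    (C : Set X) (hC : MeasurableSet C)
    (V : X → ℝ) (hVmeas : Measurable V) (hV1 : ∀ x, 1 ≤ V x)
    (φ : ℝ → ℝ)
    (hφconc : ConcaveOn ℝ (Set.Ici 1) φ)
    (hφmono : MonotoneOn φ (Set.Ici 1))
    (hφdiff : ∀ t, 1 ≤ t → DifferentiableAt ℝ φ t)
    (hφpos : ∀ t, 1 ≤ t → 0 < φ t)
    (hφderiv0 : Tendsto (deriv φ) atTop (nhds 0))
    (ν : ℕ → Measure X) (hν : ∀ k, IsProbabilityMeasure (ν k))
    (εν εb : ℝ) (hεν : εν ∈ Set.Ioo (0:ℝ) 1) (hεb : εb ∈ Set.Ioo (0:ℝ) 1)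
    (bV cV : ℝ)
    (hVint : ∀ k, 1 ≤ k → ∀ x, Integrable V (P k x))
    (hdrift : ∀ k, 1 ≤ k → ∀ x,
      ∫ y, V y ∂(P k x) ≤ V x - φ (V x) + bV * C.indicator 1 x)
    (hminor : ∀ k, 1 ≤ k → ∀ x ∈ C, ∀ A : Set X, MeasurableSet A →
      ENNReal.ofReal εν * ν k A ≤ P k x A)
    (hout : ∀ x ∉ C, bV / (1 - εb) ≤ φ (V x))
    (hin : ∀ x ∈ C, V x ≤ cV)
    -- the coupling construction (Definition 5.1); the flag `true` indicates coupling: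
    (Pbar : ℕ → Kernel ((X × X) × Bool) ((X × X) × Bool))
    (hPbar : ∀ k, IsMarkovKernel (Pbar k))
    (hbar_in : ∀ k, 1 ≤ k → ∀ x x' : X, x ∈ C → x' ∈ C →
      Pbar k ((x, x'), false) =
        ENNReal.ofReal εν • ((ν k).map fun y => ((y, y), true)) +
        ENNReal.ofReal (1 - εν) •
          (((Qmeas P ν εν k x).prod (Qmeas P ν εν k x')).map fun p => (p, false)))
    (hbar_out : ∀ k, 1 ≤ k → ∀ x x' : X, ¬(x ∈ C ∧ x' ∈ C) →
      Pbar k ((x, x'), false) =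
        (((P k x).prod (P k x')).map fun p => (p, false)))
    (hbar_diag : ∀ k, 1 ≤ k → ∀ x : X,
      Pbar k ((x, x), true) = (P k x).map fun y => ((y, y), true))
    (hbar_ne : ∀ k, 1 ≤ k → ∀ x x' : X, x ≠ x' →
      Pbar k ((x, x'), true) = Measure.dirac ((x, x'), true))
    (E : Set ((X × X) × Bool)) (hE : MeasurableSet E)
    (hEdef : E = {s : (X × X) × Bool | ¬(s.1.1 ∈ C ∧ s.1.2 ∈ C)}) :
    ∀ x x' : X,
      ENNReal.ofReal (rate φ εb 0) +
        ∑' m : ℕ, ENNReal.ofReal (rate φ εb (m + 1)) *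
          (Set.indicator ((C ×ˢ C)ᶜ) (fun _ => (1 : ENNReal)) (x, x') *
            tabooIter Pbar hE m ((x, x'), false) Set.univ) ≤
      ENNReal.ofReal (1 + rate φ εb 1 / (εb * φ 1) * (V x + V x' - 2) *
        Set.indicator ((C ×ˢ C)ᶜ) 1 (x, x')) :=
  statement15_general P hP C hC V hVmeas hV1 φ hφconc hφmono hφdiff hφpos εb hεb bV hVint hdrift
    hout Pbar hbar_out E hE hEdef
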